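/- arXiv:2112.10177 — 4 statements merged into one kernel-verified Lean document; each statement's English description precedes it below -/
import Mathlib

section
/- (Frequency-splitting inequality underlying Lemma 2.1.) There exists a constant C > 0, depending only on c₁, such that for every a : ℕ → ℂ with B(a) < ∞ and every real κ ≥ 1: Σ_{i∈ℕ} |a_i| ≤ C·A(a)·(log(2+κ²))^{1/2} + C·B(a)·(1+κ)^{−1}. -/
open Real Finset

lemma tsum_cs (f g : ℕ → ℝ) (hf : ∀ i, 0 ≤ f i) (hg : ∀ i, 0 ≤ g i)
    (Hf : Summable (fun i => f i ^ 2)) (Hg : Summable (fun i => g i ^ 2)) :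
    ∑' i, f i * g i ≤ Real.sqrt (∑' i, f i ^ 2) * Real.sqrt (∑' i, g i ^ 2) := by
  have hsum : Summable (fun i => f i * g i) := by
    apply Summable.of_nonneg_of_le (fun i => mul_nonneg (hf i) (hg i))
      (fun i => ?_) ((Hf.add Hg).div_const 2)
    nlinarith [sq_nonneg (f i - g i)]
  apply Summable.tsum_le_of_sum_le hsum
  intro s
  have h := Finset.sum_mul_sq_le_sq_mul_sq s f g
  have h1 : 0 ≤ ∑ i ∈ s, f i * g i :=
    Finset.sum_nonneg fun i _ => mul_nonneg (hf i) (hg i)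
  have h2 := Real.sqrt_le_sqrt h
  rw [Real.sqrt_sq h1, Real.sqrt_mul (Finset.sum_nonneg fun i _ => sq_nonneg (f i))] at h2
  refine h2.trans ?_
  have e1 : ∑ i ∈ s, f i ^ 2 ≤ ∑' i, f i ^ 2 := Summable.sum_le_tsum s (fun i _ => sq_nonneg _) Hf
  have e2 : ∑ i ∈ s, g i ^ 2 ≤ ∑' i, g i ^ 2 := Summable.sum_le_tsum s (fun i _ => sq_nonneg _) Hg
  exact mul_le_mul (Real.sqrt_le_sqrt e1) (Real.sqrt_le_sqrt e2) (Real.sqrt_nonneg _)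
    (Real.sqrt_nonneg _)

lemma tail_summable (N : ℕ) :
    Summable (fun i : ℕ => (((i : ℝ) + N) ^ 2)⁻¹) := by
  have h : Summable (fun n : ℕ => 1 / (n : ℝ) ^ 2) := summable_one_div_nat_pow.2 one_lt_two
  have := (summable_nat_add_iff N).2 h
  apply this.congr
  intro i
  push_cast
  rw [one_div]

lemma tail_bound (N : ℕ) (hN : 1 ≤ N) :
    ∑' i : ℕ, (((i : ℝ) + N) ^ 2)⁻¹ ≤ 2 / N := by
  have hNR : (1:ℝ) ≤ N := by exact_mod_cast hN
  apply Summable.tsum_le_of_sum_le (tail_summable N)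
  intro s
  classical
  have hsub : s ⊆ Finset.range (s.sup id + 1) := fun x hx =>
    Finset.mem_range.2 (Nat.lt_succ_of_le (Finset.le_sup (f := id) hx))
  set n := s.sup id + 1 with hn
  calc ∑ i ∈ s, (((i : ℝ) + N) ^ 2)⁻¹
      ≤ ∑ i ∈ Finset.range n, (((i : ℝ) + N) ^ 2)⁻¹ :=
        Finset.sum_le_sum_of_subset_of_nonneg hsub (fun i _ _ => by positivity)
    _ ≤ ∑ i ∈ Finset.range n,
          (2 * (((i:ℝ) + N)⁻¹ - (((i+1:ℕ):ℝ) + N)⁻¹)) := by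
        apply Finset.sum_le_sum
        intro i _
        have hi0 : (0:ℝ) ≤ (i:ℝ) := Nat.cast_nonneg i
        have hx0 : (0:ℝ) < (i:ℝ) + N := by linarith
        have heq : ((i:ℝ) + N)⁻¹ - (((i+1:ℕ):ℝ) + N)⁻¹
            = (((i:ℝ)+N) * (((i:ℝ)+N)+1))⁻¹ := by
          push_cast
          field_simp
          ring_nf
        rw [heq, ← div_eq_mul_inv, inv_eq_one_div,
          div_le_div_iff₀ (by positivity) (by positivity)]
        nlinarith
    _ ≤ 2 / N := by
        rw [← Finset.mul_sum, Finset.sum_range_sub' (f := fun j : ℕ => ((j:ℝ) + N)⁻¹)]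
        have h1 : (0:ℝ) ≤ ((n:ℝ) + N)⁻¹ := by positivity
        have h2 : (((0:ℕ):ℝ) + N)⁻¹ = ((N:ℝ))⁻¹ := by norm_num
        rw [h2, div_eq_mul_inv]
        nlinarith

set_option maxHeartbeats 1000000 in
/-- Frequency-splitting inequality underlying Lemma 2.1: given `c₁ > 0`, there exists
`C > 0`, depending only on `c₁`, such that for every sequence of nonnegative eigenvalues
`λ` with the lower Weyl-law bound `λ_i ≥ c₁·i`, every coefficient sequence `a : ℕ → ℂ`
with `B(a) := (Σ |a_i|²(1+λ_i²))^{1/2} < ∞`, and every real `κ ≥ 1`: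
`Σ_i |a_i| ≤ C·A(a)·(log(2+κ²))^{1/2} + C·B(a)·(1+κ)⁻¹`,
where `A(a) := (Σ |a_i|²(1+λ_i))^{1/2}`. -/
theorem frequency_splitting_inequality (c₁ : ℝ) (hc₁ : 0 < c₁) :
    ∃ C : ℝ, 0 < C ∧
      ∀ lam : ℕ → ℝ, (∀ i, 0 ≤ lam i) → (∀ i : ℕ, c₁ * i ≤ lam i) →
      ∀ a : ℕ → ℂ, Summable (fun i => ‖a i‖ ^ 2 * (1 + lam i ^ 2)) →
      ∀ κ : ℝ, 1 ≤ κ →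
        ∑' i, ‖a i‖ ≤
          C * Real.sqrt (∑' i, ‖a i‖ ^ 2 * (1 + lam i)) *
              Real.sqrt (Real.log (2 + κ ^ 2))
            + C * Real.sqrt (∑' i, ‖a i‖ ^ 2 * (1 + lam i ^ 2)) * (1 + κ)⁻¹ := by
  classical
  set m : ℝ := min c₁ 1 with hm
  have hm0 : 0 < m := lt_min hc₁ one_pos
  set L : ℝ := 2 + Real.log (1 / c₁ + 1) with hL
  have hLog0 : 0 ≤ Real.log (1 / c₁ + 1) := by
    have h := le_of_lt (one_div_pos.2 hc₁)
    exact Real.log_nonneg (by linarith)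
  have hL2 : (2:ℝ) ≤ L := by rw [hL]; linarith
  set C : ℝ := Real.sqrt (m⁻¹ * L) + 2 * Real.sqrt (2 / c₁) with hC
  have hC0 : 0 < C := by
    have : 0 < Real.sqrt (m⁻¹ * L) := Real.sqrt_pos.2 (by positivity)
    have h2 : 0 ≤ Real.sqrt (2 / c₁) := Real.sqrt_nonneg _
    simp only [hC]; linarith
  refine ⟨C, hC0, ?_⟩
  intro lam hlam0 hlam a hB κ hκ
  -- basic facts
  have hlamsq : ∀ i : ℕ, c₁ ^ 2 * (i:ℝ) ^ 2 ≤ lam i ^ 2 := by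
    intro i
    have h1 : c₁ * i ≤ lam i := hlam i
    have h2 : (0:ℝ) ≤ c₁ * i := by positivity
    nlinarith
  have honelam : ∀ i : ℕ, (0:ℝ) < 1 + lam i := fun i => by have := hlam0 i; linarith
  have honelam2 : ∀ i : ℕ, (0:ℝ) < 1 + lam i ^ 2 := fun i => by positivity
  -- summability of A-type series
  have hA : Summable (fun i => ‖a i‖ ^ 2 * (1 + lam i)) := by
    apply Summable.of_nonneg_of_le
      (fun i => mul_nonneg (sq_nonneg _) (honelam i).le) (fun i => ?_) (hB.mul_left 2)
    have h := hlam0 i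
    have : 1 + lam i ≤ 2 * (1 + lam i ^ 2) := by nlinarith [sq_nonneg (lam i - 1)]
    calc ‖a i‖ ^ 2 * (1 + lam i) ≤ ‖a i‖ ^ 2 * (2 * (1 + lam i ^ 2)) := by
          apply mul_le_mul_of_nonneg_left this (by positivity)
      _ = 2 * (‖a i‖ ^ 2 * (1 + lam i ^ 2)) := by ring
  -- summability of inverse weights
  have hInv : Summable (fun i : ℕ => ((1:ℝ) + lam i ^ 2)⁻¹) := by
    have hbase : Summable (fun i : ℕ => c₁⁻¹ ^ 2 * (((i:ℝ) + 1) ^ 2)⁻¹) := by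
      have := tail_summable 1
      simp only [Nat.cast_one] at this
      exact this.mul_left _
    rw [← summable_nat_add_iff 1]
    apply Summable.of_nonneg_of_le (fun i => by positivity) (fun i => ?_) hbase
    have h1 : c₁ ^ 2 * ((i:ℝ) + 1) ^ 2 ≤ 1 + lam (i + 1) ^ 2 := by
      have := hlamsq (i + 1)
      push_cast at this ⊢
      linarith
    have h2 : (0:ℝ) < c₁ ^ 2 * ((i:ℝ) + 1) ^ 2 := by positivity
    calc ((1:ℝ) + lam (i+1) ^ 2)⁻¹ ≤ (c₁ ^ 2 * ((i:ℝ) + 1) ^ 2)⁻¹ := by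
          apply inv_anti₀ h2 h1
      _ = c₁⁻¹ ^ 2 * (((i:ℝ) + 1) ^ 2)⁻¹ := by
          rw [mul_inv, inv_pow]
  -- summability of ∑ ‖a i‖
  have hsa : Summable (fun i => ‖a i‖) := by
    apply Summable.of_nonneg_of_le (fun i => norm_nonneg _) (fun i => ?_)
      ((hB.add hInv).div_const 2)
    have ht : (0:ℝ) < 1 + lam i ^ 2 := honelam2 i
    have hti : (1 + lam i ^ 2) * (1 + lam i ^ 2)⁻¹ = 1 := mul_inv_cancel₀ ht.ne'
    have hn : (0:ℝ) ≤ ‖a i‖ := norm_nonneg _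
    have key : 2 * ‖a i‖ * (1 + lam i ^ 2)
        ≤ (‖a i‖ ^ 2 * (1 + lam i ^ 2) + (1 + lam i ^ 2)⁻¹) * (1 + lam i ^ 2) := by
      nlinarith [sq_nonneg (‖a i‖ * (1 + lam i ^ 2) - 1)]
    have h2 := le_of_mul_le_mul_right key ht
    linarith
  -- choice of the cutoff index
  set N : ℕ := ⌈κ ^ 2 / c₁⌉₊ with hN
  have hκ0 : (0:ℝ) < κ := lt_of_lt_of_le one_pos hκ
  have hκ2 : (1:ℝ) ≤ κ ^ 2 := by nlinarith
  have hN1 : 1 ≤ N := Nat.one_le_iff_ne_zero.2 (by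
    intro h
    have := Nat.ceil_eq_zero.1 h
    have : κ ^ 2 / c₁ ≤ 0 := this
    have : (0:ℝ) < κ ^ 2 / c₁ := by positivity
    linarith)
  have hNR : (1:ℝ) ≤ (N:ℝ) := by exact_mod_cast hN1
  have hNκ : κ ^ 2 ≤ c₁ * N := by
    have := Nat.le_ceil (κ ^ 2 / c₁)
    rw [← hN] at this
    calc κ ^ 2 = c₁ * (κ ^ 2 / c₁) := by field_simp
      _ ≤ c₁ * N := by apply mul_le_mul_of_nonneg_left this hc₁.le
  have hNle : (N:ℝ) ≤ κ ^ 2 / c₁ + 1 := le_of_lt (Nat.ceil_lt_add_one (by positivity))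
  -- split the sum
  have hsplit : ∑ i ∈ Finset.range N, ‖a i‖ + ∑' i : ℕ, ‖a (i + N)‖ = ∑' i, ‖a i‖ :=
    Summable.sum_add_tsum_nat_add N hsa
  rw [← hsplit]
  -- notation for the two tsum weights
  set SA : ℝ := ∑' i, ‖a i‖ ^ 2 * (1 + lam i) with hSA
  set SB : ℝ := ∑' i, ‖a i‖ ^ 2 * (1 + lam i ^ 2) with hSB
  have hSA0 : 0 ≤ SA := tsum_nonneg fun i => mul_nonneg (sq_nonneg _) (honelam i).le
  have hSB0 : 0 ≤ SB := tsum_nonneg fun i => mul_nonneg (sq_nonneg _) (honelam2 i).le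
  -- LOW FREQUENCY PART
  have hlogκ : (1:ℝ) ≤ Real.log (2 + κ ^ 2) := by
    have h3 : (3:ℝ) ≤ 2 + κ ^ 2 := by linarith
    have he : Real.exp 1 ≤ 3 := by
      have := Real.exp_one_lt_d9
      linarith
    rw [show (1:ℝ) = Real.log (Real.exp 1) by rw [Real.log_exp]]
    exact Real.log_le_log (Real.exp_pos 1) (by linarith)
  have hlow : ∑ i ∈ Finset.range N, ‖a i‖
      ≤ Real.sqrt SA * Real.sqrt (m⁻¹ * (L * Real.log (2 + κ ^ 2))) := by
    have hcs := Finset.sum_mul_sq_le_sq_mul_sq (Finset.range N)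
      (fun i => ‖a i‖ * Real.sqrt (1 + lam i))
      (fun i => (Real.sqrt (1 + lam i))⁻¹)
    have hprod : ∀ i ∈ Finset.range N,
        (‖a i‖ * Real.sqrt (1 + lam i)) * (Real.sqrt (1 + lam i))⁻¹ = ‖a i‖ := by
      intro i _
      rw [mul_assoc, mul_inv_cancel₀ (ne_of_gt (Real.sqrt_pos.2 (honelam i))), mul_one]
    rw [Finset.sum_congr rfl hprod] at hcs
    have hsq1 : ∀ i, (‖a i‖ * Real.sqrt (1 + lam i)) ^ 2 = ‖a i‖ ^ 2 * (1 + lam i) := by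
      intro i
      rw [mul_pow, Real.sq_sqrt (honelam i).le]
    have hsq2 : ∀ i, ((Real.sqrt (1 + lam i))⁻¹) ^ 2 = (1 + lam i)⁻¹ := by
      intro i
      rw [inv_pow, Real.sq_sqrt (honelam i).le]
    simp only [hsq1, hsq2] at hcs
    have hb1 : ∑ i ∈ Finset.range N, ‖a i‖ ^ 2 * (1 + lam i) ≤ SA :=
      Summable.sum_le_tsum _ (fun i _ => mul_nonneg (sq_nonneg _) (honelam i).le) hA
    have hb2 : ∑ i ∈ Finset.range N, ((1:ℝ) + lam i)⁻¹
        ≤ m⁻¹ * (L * Real.log (2 + κ ^ 2)) := by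
      have step1 : ∑ i ∈ Finset.range N, ((1:ℝ) + lam i)⁻¹
          ≤ ∑ i ∈ Finset.range N, m⁻¹ * (((i:ℝ) + 1))⁻¹ := by
        apply Finset.sum_le_sum
        intro i _
        have hmi : m * ((i:ℝ) + 1) ≤ 1 + lam i := by
          have h1 : m ≤ 1 := min_le_right _ _
          have h2 : m ≤ c₁ := min_le_left _ _
          have h3 : c₁ * i ≤ lam i := hlam i
          have h4 : (0:ℝ) ≤ (i:ℝ) := Nat.cast_nonneg i
          nlinarith
        have hm1 : (0:ℝ) < m * ((i:ℝ) + 1) := by positivity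
        calc ((1:ℝ) + lam i)⁻¹ ≤ (m * ((i:ℝ) + 1))⁻¹ := inv_anti₀ hm1 hmi
          _ = m⁻¹ * (((i:ℝ) + 1))⁻¹ := by rw [mul_inv]
      have step2 : ∑ i ∈ Finset.range N, (((i:ℝ) + 1))⁻¹ ≤ 1 + Real.log N := by
        have hh : (harmonic N : ℝ) = ∑ i ∈ Finset.range N, (((i:ℝ) + 1))⁻¹ := by
          rw [harmonic]
          push_cast
          rfl
        rw [← hh]
        exact harmonic_le_one_add_log N
      have step3 : 1 + Real.log N ≤ L * Real.log (2 + κ ^ 2) := by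
        have hlogN : Real.log N ≤ Real.log (2 + κ ^ 2) + Real.log (1 / c₁ + 1) := by
          have h1 : (N:ℝ) ≤ κ ^ 2 * (1 / c₁ + 1) := by
            have : κ ^ 2 / c₁ + 1 ≤ κ ^ 2 / c₁ + κ ^ 2 := by linarith
            have h2 : κ ^ 2 / c₁ + κ ^ 2 = κ ^ 2 * (1 / c₁ + 1) := by ring
            linarith [hNle]
          calc Real.log N ≤ Real.log (κ ^ 2 * (1 / c₁ + 1)) :=
                Real.log_le_log (by linarith) h1
            _ = Real.log (κ ^ 2) + Real.log (1 / c₁ + 1) := by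
                rw [Real.log_mul (by positivity) (by positivity)]
            _ ≤ Real.log (2 + κ ^ 2) + Real.log (1 / c₁ + 1) := by
                have := Real.log_le_log (by positivity : (0:ℝ) < κ ^ 2)
                  (by linarith : κ ^ 2 ≤ 2 + κ ^ 2)
                linarith
        have e : Real.log (1 / c₁ + 1)
            ≤ Real.log (1 / c₁ + 1) * Real.log (2 + κ ^ 2) :=
          le_mul_of_one_le_right hLog0 hlogκ
        calc 1 + Real.log N
            ≤ 2 * Real.log (2 + κ ^ 2) + Real.log (1 / c₁ + 1) * Real.log (2 + κ ^ 2) := by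
              linarith [hlogN, hlogκ, e]
          _ = L * Real.log (2 + κ ^ 2) := by rw [hL]; ring
      calc ∑ i ∈ Finset.range N, ((1:ℝ) + lam i)⁻¹
          ≤ m⁻¹ * ∑ i ∈ Finset.range N, (((i:ℝ) + 1))⁻¹ := by
            rw [Finset.mul_sum]; exact step1
        _ ≤ m⁻¹ * (1 + Real.log N) := by
            apply mul_le_mul_of_nonneg_left step2 (by positivity)
        _ ≤ m⁻¹ * (L * Real.log (2 + κ ^ 2)) := by
            apply mul_le_mul_of_nonneg_left step3 (by positivity)
    have hnn : 0 ≤ ∑ i ∈ Finset.range N, ‖a i‖ :=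
      Finset.sum_nonneg fun i _ => norm_nonneg _
    have h2 := Real.sqrt_le_sqrt hcs
    rw [Real.sqrt_sq hnn] at h2
    refine h2.trans ?_
    rw [Real.sqrt_mul (Finset.sum_nonneg fun i _ =>
      mul_nonneg (sq_nonneg ‖a i‖) (honelam i).le : (0:ℝ) ≤ _)]
    exact mul_le_mul (Real.sqrt_le_sqrt hb1) (Real.sqrt_le_sqrt hb2)
      (Real.sqrt_nonneg _) (Real.sqrt_nonneg _)
  -- HIGH FREQUENCY PART
  have hhigh : ∑' i : ℕ, ‖a (i + N)‖
      ≤ Real.sqrt SB * Real.sqrt (c₁⁻¹ ^ 2 * (2 / N)) := by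
    have hBtail : Summable (fun i => ‖a (i + N)‖ ^ 2 * (1 + lam (i + N) ^ 2)) :=
      (summable_nat_add_iff N).2 hB
    have hItail : Summable (fun i : ℕ => ((1:ℝ) + lam (i + N) ^ 2)⁻¹) :=
      (summable_nat_add_iff N).2 hInv
    have hsq1 : ∀ i : ℕ, (‖a (i + N)‖ * Real.sqrt (1 + lam (i + N) ^ 2)) ^ 2
        = ‖a (i + N)‖ ^ 2 * (1 + lam (i + N) ^ 2) := by
      intro i
      rw [mul_pow, Real.sq_sqrt (honelam2 (i + N)).le]
    have hsq2 : ∀ i : ℕ, ((Real.sqrt (1 + lam (i + N) ^ 2))⁻¹) ^ 2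
        = ((1:ℝ) + lam (i + N) ^ 2)⁻¹ := by
      intro i
      rw [inv_pow, Real.sq_sqrt (honelam2 (i + N)).le]
    have Hf : Summable (fun i : ℕ =>
        (‖a (i + N)‖ * Real.sqrt (1 + lam (i + N) ^ 2)) ^ 2) :=
      hBtail.congr fun i => (hsq1 i).symm
    have Hg : Summable (fun i : ℕ => ((Real.sqrt (1 + lam (i + N) ^ 2))⁻¹) ^ 2) :=
      hItail.congr fun i => (hsq2 i).symm
    have hcs := tsum_cs (fun i => ‖a (i + N)‖ * Real.sqrt (1 + lam (i + N) ^ 2))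
      (fun i => (Real.sqrt (1 + lam (i + N) ^ 2))⁻¹)
      (fun i => mul_nonneg (norm_nonneg _) (Real.sqrt_nonneg _))
      (fun i => inv_nonneg.2 (Real.sqrt_nonneg _)) Hf Hg
    · have hprod : ∀ i : ℕ,
          (‖a (i + N)‖ * Real.sqrt (1 + lam (i + N) ^ 2))
            * (Real.sqrt (1 + lam (i + N) ^ 2))⁻¹ = ‖a (i + N)‖ := by
        intro i
        rw [mul_assoc, mul_inv_cancel₀ (ne_of_gt (Real.sqrt_pos.2 (honelam2 (i + N)))),
          mul_one]
      rw [tsum_congr hprod] at hcs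
      refine hcs.trans ?_
      have e1 : ∑' i : ℕ, (‖a (i + N)‖ * Real.sqrt (1 + lam (i + N) ^ 2)) ^ 2 ≤ SB := by
        rw [tsum_congr hsq1]
        rw [hSB, ← Summable.sum_add_tsum_nat_add N hB]
        have : 0 ≤ ∑ i ∈ Finset.range N, ‖a i‖ ^ 2 * (1 + lam i ^ 2) :=
          Finset.sum_nonneg fun i _ => by positivity
        linarith
      have e2 : ∑' i : ℕ, ((Real.sqrt (1 + lam (i + N) ^ 2))⁻¹) ^ 2
          ≤ c₁⁻¹ ^ 2 * (2 / N) := by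
        rw [tsum_congr hsq2]
        have hptw : ∀ i : ℕ, ((1:ℝ) + lam (i + N) ^ 2)⁻¹
            ≤ c₁⁻¹ ^ 2 * (((i:ℝ) + N) ^ 2)⁻¹ := by
          intro i
          have h1 : c₁ ^ 2 * ((i:ℝ) + N) ^ 2 ≤ 1 + lam (i + N) ^ 2 := by
            have := hlamsq (i + N)
            push_cast at this ⊢
            linarith
          have h2 : (0:ℝ) < c₁ ^ 2 * ((i:ℝ) + N) ^ 2 := by
            have : (0:ℝ) ≤ (i:ℝ) := Nat.cast_nonneg i
            have : (0:ℝ) < (i:ℝ) + N := by linarith [hNR]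
            positivity
          calc ((1:ℝ) + lam (i + N) ^ 2)⁻¹ ≤ (c₁ ^ 2 * ((i:ℝ) + N) ^ 2)⁻¹ :=
              inv_anti₀ h2 h1
            _ = c₁⁻¹ ^ 2 * (((i:ℝ) + N) ^ 2)⁻¹ := by rw [mul_inv, inv_pow]
        calc ∑' i : ℕ, ((1:ℝ) + lam (i + N) ^ 2)⁻¹
            ≤ ∑' i : ℕ, c₁⁻¹ ^ 2 * (((i:ℝ) + N) ^ 2)⁻¹ :=
              Summable.tsum_le_tsum hptw hItail ((tail_summable N).mul_left _)
          _ = c₁⁻¹ ^ 2 * ∑' i : ℕ, (((i:ℝ) + N) ^ 2)⁻¹ := tsum_mul_left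
          _ ≤ c₁⁻¹ ^ 2 * (2 / N) := by
              apply mul_le_mul_of_nonneg_left (tail_bound N hN1) (by positivity)
      exact mul_le_mul (Real.sqrt_le_sqrt e1) (Real.sqrt_le_sqrt e2)
        (Real.sqrt_nonneg _) (Real.sqrt_nonneg _)
  -- combine
  have hfac1 : Real.sqrt (m⁻¹ * (L * Real.log (2 + κ ^ 2)))
      = Real.sqrt (m⁻¹ * L) * Real.sqrt (Real.log (2 + κ ^ 2)) := by
    rw [← Real.sqrt_mul (by positivity), mul_assoc]
  have hfac2 : Real.sqrt (c₁⁻¹ ^ 2 * (2 / N)) ≤ 2 * Real.sqrt (2 / c₁) * (1 + κ)⁻¹ := by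
    have hstep : c₁⁻¹ ^ 2 * (2 / N) ≤ (2 / c₁) * (κ⁻¹) ^ 2 := by
      have h1 : (N:ℝ)⁻¹ ≤ c₁ / κ ^ 2 := by
        rw [inv_eq_one_div, div_le_div_iff₀ (by linarith : (0:ℝ) < (N:ℝ)) (by positivity)]
        nlinarith [hNκ]
      have h2 : c₁⁻¹ ^ 2 * (2 / N) = 2 * c₁⁻¹ ^ 2 * (N:ℝ)⁻¹ := by
        rw [div_eq_mul_inv]; ring
      have h3 : (2:ℝ) * c₁⁻¹ ^ 2 * (N:ℝ)⁻¹ ≤ 2 * c₁⁻¹ ^ 2 * (c₁ / κ ^ 2) :=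
        mul_le_mul_of_nonneg_left h1 (by positivity)
      have h4 : (2:ℝ) * c₁⁻¹ ^ 2 * (c₁ / κ ^ 2) = (2 / c₁) * (κ⁻¹) ^ 2 := by
        field_simp
      linarith
    calc Real.sqrt (c₁⁻¹ ^ 2 * (2 / N)) ≤ Real.sqrt ((2 / c₁) * (κ⁻¹) ^ 2) :=
        Real.sqrt_le_sqrt hstep
      _ = Real.sqrt (2 / c₁) * κ⁻¹ := by
          rw [Real.sqrt_mul (by positivity), Real.sqrt_sq (by positivity)]
      _ ≤ Real.sqrt (2 / c₁) * (2 * (1 + κ)⁻¹) := by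
          apply mul_le_mul_of_nonneg_left ?_ (Real.sqrt_nonneg _)
          rw [inv_eq_one_div, show (2:ℝ) * (1 + κ)⁻¹ = 2 / (1 + κ) by rw [div_eq_mul_inv],
            div_le_div_iff₀ hκ0 (by linarith : (0:ℝ) < 1 + κ)]
          nlinarith
      _ = 2 * Real.sqrt (2 / c₁) * (1 + κ)⁻¹ := by ring
  have hsqL : Real.sqrt (m⁻¹ * L) ≤ C := by
    have : (0:ℝ) ≤ 2 * Real.sqrt (2 / c₁) := by positivity
    simp only [hC]; linarith
  have hsqc : 2 * Real.sqrt (2 / c₁) ≤ C := by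
    have : (0:ℝ) ≤ Real.sqrt (m⁻¹ * L) := Real.sqrt_nonneg _
    simp only [hC]; linarith
  have hlog0 : (0:ℝ) ≤ Real.sqrt (Real.log (2 + κ ^ 2)) := Real.sqrt_nonneg _
  have hinv0 : (0:ℝ) ≤ (1 + κ)⁻¹ := by positivity
  have t1 : ∑ i ∈ Finset.range N, ‖a i‖
      ≤ C * Real.sqrt SA * Real.sqrt (Real.log (2 + κ ^ 2)) := by
    refine hlow.trans ?_
    rw [hfac1, show Real.sqrt SA * (Real.sqrt (m⁻¹ * L) * Real.sqrt (Real.log (2 + κ ^ 2)))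
      = Real.sqrt (m⁻¹ * L) * Real.sqrt SA * Real.sqrt (Real.log (2 + κ ^ 2)) by ring]
    have := mul_le_mul_of_nonneg_right (mul_le_mul_of_nonneg_right hsqL
      (Real.sqrt_nonneg SA)) hlog0
    exact this
  have t2 : ∑' i : ℕ, ‖a (i + N)‖ ≤ C * Real.sqrt SB * (1 + κ)⁻¹ := by
    refine hhigh.trans ?_
    calc Real.sqrt SB * Real.sqrt (c₁⁻¹ ^ 2 * (2 / N))
        ≤ Real.sqrt SB * (2 * Real.sqrt (2 / c₁) * (1 + κ)⁻¹) :=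
          mul_le_mul_of_nonneg_left hfac2 (Real.sqrt_nonneg _)
      _ = 2 * Real.sqrt (2 / c₁) * Real.sqrt SB * (1 + κ)⁻¹ := by ring
      _ ≤ C * Real.sqrt SB * (1 + κ)⁻¹ :=
          mul_le_mul_of_nonneg_right (mul_le_mul_of_nonneg_right hsqc
            (Real.sqrt_nonneg SB)) hinv0
  exact add_le_add t1 t2
end

section
/- (Lemma 2.1, critical logarithmic Sobolev interpolation in coefficient form.) There exists a constant C₀ > 0, depending only on c₁, such that for every a : ℕ → ℂ with B(a) < ∞ and A(a) ≥ 1: Σ_{i∈ℕ} |a_i| ≤ C₀·A(a)·(1 + (log(1+B(a)²))^{1/2}). This is the coefficient form of the two-dimensional inequality ‖v‖_{L∞} ≤ C₀·‖v‖_{H¹}·(1+√(log(1+‖v‖²_{H²}))) for v ∈ H². -/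
/-- Telescoping tail bound: `∑_{k<n} 1/(N+k)² ≤ 2/N` for `N ≥ 1`. -/
lemma aux_tail_sq_sum (N : ℕ) (hN : 1 ≤ N) (n : ℕ) :
    ∑ k ∈ Finset.range n, (1 : ℝ) / ((k + N : ℕ) : ℝ) ^ 2 ≤ 2 / N := by
  have hNR : (1 : ℝ) ≤ N := by exact_mod_cast hN
  have key : ∀ k : ℕ, (1 : ℝ) / ((k + N : ℕ) : ℝ) ^ 2 ≤
      2 * ((1 : ℝ) / ((k : ℝ) + N) - 1 / ((k : ℝ) + 1 + N)) := by
    intro k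
    have hj : (1 : ℝ) ≤ (k : ℝ) + N := by
      have : (0 : ℝ) ≤ (k : ℝ) := Nat.cast_nonneg k
      linarith
    have hj0 : (0 : ℝ) < (k : ℝ) + N := by linarith
    have hj1 : (0 : ℝ) < (k : ℝ) + 1 + N := by linarith
    have hcast : ((k + N : ℕ) : ℝ) = (k : ℝ) + N := by push_cast; ring
    rw [hcast]
    have hdiff : (1 : ℝ) / ((k : ℝ) + N) - 1 / ((k : ℝ) + 1 + N)
        = 1 / (((k : ℝ) + N) * ((k : ℝ) + 1 + N)) := by
      field_simp
      ring
    rw [hdiff, mul_one_div, div_le_div_iff₀ (by positivity) (by positivity)]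
    nlinarith
  calc ∑ k ∈ Finset.range n, (1 : ℝ) / ((k + N : ℕ) : ℝ) ^ 2
      ≤ ∑ k ∈ Finset.range n, 2 * ((1 : ℝ) / ((k : ℝ) + N) - 1 / ((k : ℝ) + 1 + N)) :=
        Finset.sum_le_sum fun k _ => key k
    _ = 2 * ∑ k ∈ Finset.range n,
          ((fun j : ℕ => (1 : ℝ) / ((j : ℝ) + N)) k - (fun j : ℕ => (1 : ℝ) / ((j : ℝ) + N)) (k + 1)) := by
        rw [← Finset.mul_sum]
        congr 1
        refine Finset.sum_congr rfl fun k _ => ?_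
        push_cast
        ring_nf
    _ = 2 * ((1 : ℝ) / ((0 : ℕ) + N) - 1 / ((n : ℝ) + N)) := by
        rw [Finset.sum_range_sub' (fun j : ℕ => (1 : ℝ) / ((j : ℝ) + N)) n]
    _ ≤ 2 / N := by
        have h1 : (0 : ℝ) < (n : ℝ) + N := by
          have : (0 : ℝ) ≤ (n : ℝ) := Nat.cast_nonneg n
          linarith
        have h2 : (0 : ℝ) ≤ 1 / ((n : ℝ) + N) := by positivity
        have : ((0 : ℕ) : ℝ) + N = (N : ℝ) := by push_cast; ring
        rw [this]
        rw [two_mul]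
        have hN0 : (0 : ℝ) < N := by linarith
        rw [div_eq_mul_one_div 2 (N:ℝ), two_mul]
        linarith

/-- Harmonic sum bound. -/
lemma aux_harmonic (N : ℕ) :
    ∑ i ∈ Finset.range N, (1 : ℝ) / (1 + (i : ℝ)) ≤ 1 + Real.log N := by
  have h := harmonic_le_one_add_log N
  have hcast : ((harmonic N : ℚ) : ℝ) = ∑ i ∈ Finset.range N, (1 : ℝ) / (1 + (i : ℝ)) := by
    rw [harmonic]
    push_cast
    refine Finset.sum_congr rfl fun i _ => ?_
    rw [one_div]
    ring_nf
  rw [← hcast]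
  exact_mod_cast h

/-- `√(1+L) ≤ 1 + √L`. -/
lemma aux_sqrt_add (L : ℝ) (hL : 0 ≤ L) : Real.sqrt (1 + L) ≤ 1 + Real.sqrt L := by
  have h1 : (1 : ℝ) + L ≤ (1 + Real.sqrt L) ^ 2 := by
    nlinarith [Real.sq_sqrt hL, Real.sqrt_nonneg L]
  calc Real.sqrt (1 + L) ≤ Real.sqrt ((1 + Real.sqrt L) ^ 2) := Real.sqrt_le_sqrt h1
    _ = 1 + Real.sqrt L := Real.sqrt_sq (by positivity)

set_option maxHeartbeats 2000000 in
/-- Lemma 2.1 (critical logarithmic Sobolev interpolation, coefficient form): given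
`c₁ > 0`, there exists `C₀ > 0`, depending only on `c₁`, such that for every sequence of
nonnegative eigenvalues `λ` with the lower Weyl-law bound `λ_i ≥ c₁·i` and every
coefficient sequence `a : ℕ → ℂ` with `B(a) := (Σ |a_i|²(1+λ_i²))^{1/2} < ∞` and
`A(a) := (Σ |a_i|²(1+λ_i))^{1/2} ≥ 1`:
`Σ_i |a_i| ≤ C₀·A(a)·(1 + (log(1+B(a)²))^{1/2})`.
This is the coefficient form of the 2D inequality
`‖v‖_{L∞} ≤ C₀·‖v‖_{H¹}·(1+√(log(1+‖v‖²_{H²})))` for `v ∈ H²`. -/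
theorem critical_log_sobolev_interpolation (c₁ : ℝ) (hc₁ : 0 < c₁) :
    ∃ C₀ : ℝ, 0 < C₀ ∧
      ∀ lam : ℕ → ℝ, (∀ i, 0 ≤ lam i) → (∀ i : ℕ, c₁ * i ≤ lam i) →
      ∀ a : ℕ → ℂ, Summable (fun i => ‖a i‖ ^ 2 * (1 + lam i ^ 2)) →
        1 ≤ Real.sqrt (∑' i, ‖a i‖ ^ 2 * (1 + lam i)) →
        ∑' i, ‖a i‖ ≤
          C₀ * Real.sqrt (∑' i, ‖a i‖ ^ 2 * (1 + lam i)) *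
            (1 + Real.sqrt (Real.log
              (1 + (Real.sqrt (∑' i, ‖a i‖ ^ 2 * (1 + lam i ^ 2))) ^ 2))) := by
  set m := min 1 c₁ with hm
  have hm0 : 0 < m := lt_min one_pos hc₁
  have hm1 : m ≤ 1 := min_le_left _ _
  have hmc : m ≤ c₁ := min_le_right _ _
  refine ⟨Real.sqrt (1 / m) + (1 / 2 + 1 / c₁ ^ 2), by positivity, ?_⟩
  intro lam hlam0 hlamc a hBsum hA
  -- nonnegativity of terms
  have ht2 : ∀ i, (0 : ℝ) ≤ ‖a i‖ ^ 2 * (1 + lam i ^ 2) := fun i => by positivity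
  have ht1 : ∀ i, (0 : ℝ) ≤ ‖a i‖ ^ 2 * (1 + lam i) := fun i => by
    have := hlam0 i; positivity
  have hS1sum : Summable (fun i => ‖a i‖ ^ 2 * (1 + lam i)) := by
    refine Summable.of_nonneg_of_le ht1 (fun i => ?_) (hBsum.mul_left 2)
    have hfac : 1 + lam i ≤ 2 * (1 + lam i ^ 2) := by nlinarith [sq_nonneg (lam i - 1)]
    calc ‖a i‖ ^ 2 * (1 + lam i) ≤ ‖a i‖ ^ 2 * (2 * (1 + lam i ^ 2)) :=
          mul_le_mul_of_nonneg_left hfac (sq_nonneg _)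
      _ = 2 * (‖a i‖ ^ 2 * (1 + lam i ^ 2)) := by ring
  set S1 : ℝ := ∑' i, ‖a i‖ ^ 2 * (1 + lam i) with hS1def
  set S2 : ℝ := ∑' i, ‖a i‖ ^ 2 * (1 + lam i ^ 2) with hS2def
  have hS1nn : 0 ≤ S1 := tsum_nonneg ht1
  have hS2nn : 0 ≤ S2 := tsum_nonneg ht2
  have hS1ge1 : 1 ≤ S1 := by
    rwa [Real.one_le_sqrt] at hA
  have hS1le : S1 ≤ 2 * S2 := by
    have h := Summable.tsum_le_tsum (f := fun i => ‖a i‖ ^ 2 * (1 + lam i))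
      (g := fun i => 2 * (‖a i‖ ^ 2 * (1 + lam i ^ 2)))
      (fun i => by
        have hfac : 1 + lam i ≤ 2 * (1 + lam i ^ 2) := by nlinarith [sq_nonneg (lam i - 1)]
        calc ‖a i‖ ^ 2 * (1 + lam i) ≤ ‖a i‖ ^ 2 * (2 * (1 + lam i ^ 2)) :=
              mul_le_mul_of_nonneg_left hfac (sq_nonneg _)
          _ = 2 * (‖a i‖ ^ 2 * (1 + lam i ^ 2)) := by ring)
      hS1sum (hBsum.mul_left 2)
    rwa [tsum_mul_left] at h
  have hS2pos : 0 < S2 := by linarith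
  set N : ℕ := ⌈S2⌉₊ with hNdef
  have hN1 : 1 ≤ N := Nat.one_le_ceil_iff.mpr hS2pos
  have hNS2 : S2 ≤ (N : ℝ) := Nat.le_ceil S2
  have hNle : (N : ℝ) ≤ 1 + S2 := by
    have := Nat.ceil_lt_add_one hS2nn
    linarith
  have hNpos : (0 : ℝ) < N := by
    have : (1 : ℝ) ≤ N := by exact_mod_cast hN1
    linarith
  -- pointwise AM-GM bound for |a i|
  have hamgm : ∀ i, ‖a i‖ ≤ (1 / (2 * S2)) * (‖a i‖ ^ 2 * (1 + lam i ^ 2))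
      + (S2 / 2) * (1 / (1 + lam i ^ 2)) := by
    intro i
    have ht : (0 : ℝ) < 1 + lam i ^ 2 := by positivity
    have hx : (0 : ℝ) ≤ ‖a i‖ := norm_nonneg _
    have key : 0 ≤ (‖a i‖ * (1 + lam i ^ 2) - S2) ^ 2 := sq_nonneg _
    have expand : (1 / (2 * S2)) * (‖a i‖ ^ 2 * (1 + lam i ^ 2))
        + (S2 / 2) * (1 / (1 + lam i ^ 2)) - ‖a i‖
        = (‖a i‖ * (1 + lam i ^ 2) - S2) ^ 2 / (2 * S2 * (1 + lam i ^ 2)) := by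
      field_simp
      ring
    rw [← sub_nonneg, expand]
    positivity
  -- summability of weights 1/(1+lam i^2)
  have hwsum : Summable (fun i : ℕ => 1 / (1 + lam i ^ 2)) := by
    have hbase : Summable (fun n : ℕ => 1 / (n : ℝ) ^ 2) :=
      Real.summable_one_div_nat_pow.mpr one_lt_two
    have hshift : Summable (fun n : ℕ => 1 / ((n : ℝ) + 1) ^ 2) := by
      have := (summable_nat_add_iff 1).mpr hbase
      simpa [Nat.cast_add] using this
    set m2 := min 1 (c₁ ^ 2) with hm2
    have hm20 : 0 < m2 := lt_min one_pos (by positivity)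
    refine Summable.of_nonneg_of_le (fun i => by positivity) (fun i => ?_)
      (hshift.mul_left (2 / m2))
    have hlge : c₁ * i ≤ lam i := hlamc i
    have hl0 : 0 ≤ lam i := hlam0 i
    have h1 : c₁ ^ 2 * (i : ℝ) ^ 2 ≤ lam i ^ 2 := by
      have h0 : 0 ≤ c₁ * i := by positivity
      nlinarith
    have h2 : m2 * ((i : ℝ) + 1) ^ 2 / 2 ≤ 1 + lam i ^ 2 := by
      have hmle1 : m2 ≤ 1 := min_le_left _ _
      have hmlec : m2 ≤ c₁ ^ 2 := min_le_right _ _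
      have hi0 : (0 : ℝ) ≤ (i : ℝ) := Nat.cast_nonneg i
      nlinarith [sq_nonneg ((i:ℝ) - 1)]
    have hrw : 2 / m2 * (1 / ((i : ℝ) + 1) ^ 2) = 2 / (m2 * ((i : ℝ) + 1) ^ 2) := by
      rw [div_mul_div_comm, mul_one]
    rw [hrw, div_le_div_iff₀ (by positivity) (by positivity)]
    nlinarith
  -- summability of |a i|
  have habs_sum : Summable (fun i => ‖a i‖) := by
    refine Summable.of_nonneg_of_le (fun i => norm_nonneg _) hamgm
      ((hBsum.mul_left _).add (hwsum.mul_left _))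
  -- split the sum
  have hsplit : ∑ i ∈ Finset.range N, ‖a i‖ + ∑' i, ‖a (i + N)‖ = ∑' i, ‖a i‖ :=
    habs_sum.sum_add_tsum_nat_add N
  set L : ℝ := Real.log (1 + S2) with hLdef
  have hLnn : 0 ≤ L := Real.log_nonneg (by linarith)
  -- TAIL BOUND
  have htail : ∑' i, ‖a (i + N)‖ ≤ 1 / 2 + 1 / c₁ ^ 2 := by
    have hshift_sum : Summable (fun k => ‖a (k + N)‖) :=
      (summable_nat_add_iff N).mpr habs_sum
    have ht2shift : Summable (fun k => ‖a (k + N)‖ ^ 2 * (1 + lam (k + N) ^ 2)) :=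
      (summable_nat_add_iff N).mpr hBsum
    have hwshift : Summable (fun k => 1 / (1 + lam (k + N) ^ 2)) :=
      (summable_nat_add_iff N).mpr hwsum
    have h1 : ∑' k, ‖a (k + N)‖ ≤
        ∑' k, ((1 / (2 * S2)) * (‖a (k + N)‖ ^ 2 * (1 + lam (k + N) ^ 2))
          + (S2 / 2) * (1 / (1 + lam (k + N) ^ 2))) :=
      Summable.tsum_le_tsum (fun k => hamgm (k + N)) hshift_sum
        ((ht2shift.mul_left _).add (hwshift.mul_left _))
    rw [Summable.tsum_add (ht2shift.mul_left _) (hwshift.mul_left _), tsum_mul_left,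
      tsum_mul_left] at h1
    have h2 : ∑' k, ‖a (k + N)‖ ^ 2 * (1 + lam (k + N) ^ 2) ≤ S2 := by
      have hsp := hBsum.sum_add_tsum_nat_add (f := fun i => ‖a i‖ ^ 2 * (1 + lam i ^ 2)) N
      have hpos : (0:ℝ) ≤ ∑ i ∈ Finset.range N, ‖a i‖ ^ 2 * (1 + lam i ^ 2) :=
        Finset.sum_nonneg fun i _ => ht2 i
      rw [hS2def]
      linarith [hsp]
    have h3 : ∑' k, 1 / (1 + lam (k + N) ^ 2) ≤ 2 / (c₁ ^ 2 * N) := by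
      refine Real.tsum_le_of_sum_range_le (fun k => by positivity) (fun n => ?_)
      have hpt : ∀ k : ℕ, 1 / (1 + lam (k + N) ^ 2)
          ≤ 1 / c₁ ^ 2 * (1 / ((k + N : ℕ) : ℝ) ^ 2) := by
        intro k
        have hj : (1 : ℝ) ≤ ((k + N : ℕ) : ℝ) := by
          exact_mod_cast le_trans hN1 (Nat.le_add_left N k)
        have hl := hlamc (k + N)
        have hl0 := hlam0 (k + N)
        have hi0 : (0:ℝ) ≤ ((k + N : ℕ) : ℝ) := by linarith
        have h0 : (0:ℝ) ≤ c₁ * ((k + N : ℕ) : ℝ) := by positivity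
        have hsq0 : (c₁ * ((k + N : ℕ) : ℝ)) * (c₁ * ((k + N : ℕ) : ℝ))
            ≤ lam (k + N) * lam (k + N) := mul_le_mul hl hl h0 hl0
        have hsq : c₁ ^ 2 * ((k + N : ℕ) : ℝ) ^ 2 ≤ 1 + lam (k + N) ^ 2 := by
          nlinarith [hsq0]
        have hrw : 1 / c₁ ^ 2 * (1 / ((k + N : ℕ) : ℝ) ^ 2)
            = 1 / (c₁ ^ 2 * ((k + N : ℕ) : ℝ) ^ 2) := by
          rw [div_mul_div_comm, mul_one]
        rw [hrw, div_le_div_iff₀ (by positivity) (by positivity)]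
        nlinarith
      calc ∑ k ∈ Finset.range n, 1 / (1 + lam (k + N) ^ 2)
          ≤ ∑ k ∈ Finset.range n, 1 / c₁ ^ 2 * (1 / ((k + N : ℕ) : ℝ) ^ 2) :=
            Finset.sum_le_sum fun k _ => hpt k
        _ = 1 / c₁ ^ 2 * ∑ k ∈ Finset.range n, 1 / ((k + N : ℕ) : ℝ) ^ 2 := by
            rw [Finset.mul_sum]
        _ ≤ 1 / c₁ ^ 2 * (2 / N) := by
            have := aux_tail_sq_sum N hN1 n
            have hc : (0:ℝ) ≤ 1 / c₁ ^ 2 := by positivity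
            exact mul_le_mul_of_nonneg_left this hc
        _ = 2 / (c₁ ^ 2 * N) := by
            rw [div_mul_div_comm, one_mul]
    have hterm1 : (1 / (2 * S2)) * (∑' k, ‖a (k + N)‖ ^ 2 * (1 + lam (k + N) ^ 2))
        ≤ 1 / 2 := by
      have hc : (0:ℝ) ≤ 1 / (2 * S2) := by positivity
      calc (1 / (2 * S2)) * (∑' k, ‖a (k + N)‖ ^ 2 * (1 + lam (k + N) ^ 2))
          ≤ (1 / (2 * S2)) * S2 := mul_le_mul_of_nonneg_left h2 hc
        _ = 1 / 2 := by
            field_simp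
    have hterm2 : (S2 / 2) * (∑' k, 1 / (1 + lam (k + N) ^ 2)) ≤ 1 / c₁ ^ 2 := by
      have hc : (0:ℝ) ≤ S2 / 2 := by positivity
      calc (S2 / 2) * (∑' k, 1 / (1 + lam (k + N) ^ 2))
          ≤ (S2 / 2) * (2 / (c₁ ^ 2 * N)) := mul_le_mul_of_nonneg_left h3 hc
        _ = S2 / (c₁ ^ 2 * N) := by ring
        _ ≤ (N : ℝ) / (c₁ ^ 2 * N) := by
            have h0 : (0:ℝ) < c₁ ^ 2 * N := by positivity
            exact (div_le_div_iff_of_pos_right h0).mpr hNS2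
        _ = 1 / c₁ ^ 2 := by
            have hN0 : (N:ℝ) ≠ 0 := ne_of_gt hNpos
            field_simp
    linarith
  -- HEAD BOUND
  have hhead : ∑ i ∈ Finset.range N, ‖a i‖ ≤
      Real.sqrt (1 / m) * Real.sqrt S1 * (1 + Real.sqrt L) := by
    have key := Finset.sum_mul_sq_le_sq_mul_sq (Finset.range N)
      (fun i => ‖a i‖ * Real.sqrt (1 + lam i)) (fun i => (Real.sqrt (1 + lam i))⁻¹)
    have hpos : ∀ i, (0:ℝ) < 1 + lam i := fun i => by have := hlam0 i; linarith
    have hfg : ∀ i, ‖a i‖ * Real.sqrt (1 + lam i) * (Real.sqrt (1 + lam i))⁻¹ = ‖a i‖ := by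
      intro i
      rw [mul_assoc, mul_inv_cancel₀ (Real.sqrt_ne_zero'.mpr (hpos i)), mul_one]
    have hf2 : ∀ i, (‖a i‖ * Real.sqrt (1 + lam i)) ^ 2 = ‖a i‖ ^ 2 * (1 + lam i) := by
      intro i
      rw [mul_pow, Real.sq_sqrt (hpos i).le]
    have hg2 : ∀ i, ((Real.sqrt (1 + lam i))⁻¹) ^ 2 = (1 + lam i)⁻¹ := by
      intro i
      rw [← Real.sqrt_inv, Real.sq_sqrt (inv_nonneg.mpr (hpos i).le)]
    simp only [hfg, hf2, hg2] at key
    have hsum1 : ∑ i ∈ Finset.range N, ‖a i‖ ^ 2 * (1 + lam i) ≤ S1 :=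
      Summable.sum_le_tsum (Finset.range N) (fun i _ => ht1 i) hS1sum
    have hsum2 : ∑ i ∈ Finset.range N, ((1:ℝ) + lam i)⁻¹ ≤ (1 / m) * (1 + L) := by
      have hpt : ∀ i : ℕ, ((1:ℝ) + lam i)⁻¹ ≤ (1 / m) * (1 / (1 + (i : ℝ))) := by
        intro i
        have hl := hlamc i
        have hi0 : (0:ℝ) ≤ (i : ℝ) := Nat.cast_nonneg i
        have hml : m * (1 + (i : ℝ)) ≤ 1 + lam i := by nlinarith
        have hrw : (1 / m) * (1 / (1 + (i : ℝ))) = 1 / (m * (1 + (i : ℝ))) := by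
          rw [div_mul_div_comm, mul_one]
        rw [hrw, ← one_div, div_le_div_iff₀ (hpos i) (by positivity)]
        linarith
      calc ∑ i ∈ Finset.range N, ((1:ℝ) + lam i)⁻¹
          ≤ ∑ i ∈ Finset.range N, (1 / m) * (1 / (1 + (i : ℝ))) :=
            Finset.sum_le_sum fun i _ => hpt i
        _ = (1 / m) * ∑ i ∈ Finset.range N, 1 / (1 + (i : ℝ)) := by rw [Finset.mul_sum]
        _ ≤ (1 / m) * (1 + Real.log N) := by
            have hc : (0:ℝ) ≤ 1 / m := by positivity
            exact mul_le_mul_of_nonneg_left (aux_harmonic N) hc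
        _ ≤ (1 / m) * (1 + L) := by
            have hc : (0:ℝ) ≤ 1 / m := by positivity
            have hlog : Real.log N ≤ L := by
              rw [hLdef]
              exact Real.log_le_log hNpos hNle
            nlinarith
    have hkey2 : (∑ i ∈ Finset.range N, ‖a i‖) ^ 2 ≤ S1 * ((1 / m) * (1 + L)) := by
      have hnn1 : (0:ℝ) ≤ ∑ i ∈ Finset.range N, ‖a i‖ ^ 2 * (1 + lam i) :=
        Finset.sum_nonneg fun i _ => ht1 i
      have hnn2 : (0:ℝ) ≤ ∑ i ∈ Finset.range N, ((1:ℝ) + lam i)⁻¹ :=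
        Finset.sum_nonneg fun i _ => inv_nonneg.mpr (hpos i).le
      calc (∑ i ∈ Finset.range N, ‖a i‖) ^ 2
          ≤ (∑ i ∈ Finset.range N, ‖a i‖ ^ 2 * (1 + lam i))
            * ∑ i ∈ Finset.range N, ((1:ℝ) + lam i)⁻¹ := key
        _ ≤ S1 * ((1 / m) * (1 + L)) := mul_le_mul hsum1 hsum2 hnn2 hS1nn
    have hHnn : (0:ℝ) ≤ ∑ i ∈ Finset.range N, ‖a i‖ :=
      Finset.sum_nonneg fun i _ => norm_nonneg _
    have hstep : ∑ i ∈ Finset.range N, ‖a i‖ ≤ Real.sqrt (S1 * ((1 / m) * (1 + L))) := by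
      rw [← Real.sqrt_sq hHnn]
      exact Real.sqrt_le_sqrt hkey2
    calc ∑ i ∈ Finset.range N, ‖a i‖ ≤ Real.sqrt (S1 * ((1 / m) * (1 + L))) := hstep
      _ = Real.sqrt S1 * (Real.sqrt (1 / m) * Real.sqrt (1 + L)) := by
          rw [Real.sqrt_mul hS1nn, Real.sqrt_mul (by positivity : (0:ℝ) ≤ 1 / m)]
      _ ≤ Real.sqrt S1 * (Real.sqrt (1 / m) * (1 + Real.sqrt L)) := by
          have h := aux_sqrt_add L hLnn
          have h1 : (0:ℝ) ≤ Real.sqrt S1 := Real.sqrt_nonneg _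
          have h2 : (0:ℝ) ≤ Real.sqrt (1 / m) := Real.sqrt_nonneg _
          exact mul_le_mul_of_nonneg_left (mul_le_mul_of_nonneg_left h h2) h1
      _ = Real.sqrt (1 / m) * Real.sqrt S1 * (1 + Real.sqrt L) := by ring
  -- COMBINE
  have hgoal_log : (Real.sqrt S2) ^ 2 = S2 := Real.sq_sqrt hS2nn
  have hsqrtS1 : 1 ≤ Real.sqrt S1 := hA
  have hfac : 1 ≤ 1 + Real.sqrt L := by
    have := Real.sqrt_nonneg L; linarith
  rw [← hsplit]
  rw [hgoal_log]
  have htail' : ∑' i, ‖a (i + N)‖ ≤ (1 / 2 + 1 / c₁ ^ 2) * Real.sqrt S1 * (1 + Real.sqrt L) := by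
    calc ∑' i, ‖a (i + N)‖ ≤ 1 / 2 + 1 / c₁ ^ 2 := htail
      _ = (1 / 2 + 1 / c₁ ^ 2) * 1 * 1 := by ring
      _ ≤ (1 / 2 + 1 / c₁ ^ 2) * Real.sqrt S1 * (1 + Real.sqrt L) := by
          have hc : (0:ℝ) ≤ 1 / 2 + 1 / c₁ ^ 2 := by positivity
          have h1 : (1 / 2 + 1 / c₁ ^ 2) * 1 ≤ (1 / 2 + 1 / c₁ ^ 2) * Real.sqrt S1 :=
            mul_le_mul_of_nonneg_left hsqrtS1 hc
          have h2 : (0:ℝ) ≤ (1 / 2 + 1 / c₁ ^ 2) * Real.sqrt S1 := by positivity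
          calc (1 / 2 + 1 / c₁ ^ 2) * 1 * 1 = (1 / 2 + 1 / c₁ ^ 2) * 1 := by ring
            _ ≤ (1 / 2 + 1 / c₁ ^ 2) * Real.sqrt S1 := h1
            _ = (1 / 2 + 1 / c₁ ^ 2) * Real.sqrt S1 * 1 := by ring
            _ ≤ (1 / 2 + 1 / c₁ ^ 2) * Real.sqrt S1 * (1 + Real.sqrt L) :=
              mul_le_mul_of_nonneg_left hfac h2
  calc ∑ i ∈ Finset.range N, ‖a i‖ + ∑' i, ‖a (i + N)‖
      ≤ Real.sqrt (1 / m) * Real.sqrt S1 * (1 + Real.sqrt L)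
        + (1 / 2 + 1 / c₁ ^ 2) * Real.sqrt S1 * (1 + Real.sqrt L) := add_le_add hhead htail'
    _ = (Real.sqrt (1 / m) + (1 / 2 + 1 / c₁ ^ 2)) * Real.sqrt S1 * (1 + Real.sqrt L) := by ring
end

section
/- (Double-exponential growth recursion from the proof of Lemma 3.1.) Let σ > 0, ε ∈ (0, 2σ), δt > 0, m > 0 and C₀ ≥ 0 be real numbers, and let r ≥ 1 satisfy δt·m^{−σ}·r^{2σ} ≥ 2·(C₀·δt + 1) and δt·r^{ε} ≥ 2·m^{σ}. If (a_n)_{n≥1} is a sequence of nonnegative real numbers with a₁ ≥ r and a_{n+1} ≥ a_n·(δt·m^{−σ}·a_n^{2σ} − C₀·δt − 1) for every n ≥ 1, then a_n ≥ r^{(2σ+1−ε)^{n−1}} for every n ≥ 1; in particular, if moreover r ≥ 2, then a_n ≥ 2^{(2σ+1−ε)^{n−1}} for every n ≥ 1. -/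
/-- Double-exponential growth recursion from the proof of Lemma 3.1: if `σ > 0`,
`ε ∈ (0,2σ)`, `δt > 0`, `m > 0`, `C₀ ≥ 0` and `r ≥ 1` satisfies
`δt·m^{−σ}·r^{2σ} ≥ 2·(C₀·δt + 1)` and `δt·r^{ε} ≥ 2·m^{σ}`, then any nonnegative sequence
`(a_n)_{n≥1}` with `a₁ ≥ r` and `a_{n+1} ≥ a_n·(δt·m^{−σ}·a_n^{2σ} − C₀·δt − 1)` for all
`n ≥ 1` satisfies `a_n ≥ r^{(2σ+1−ε)^{n−1}}` for all `n ≥ 1`; in particular, if moreover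
`r ≥ 2`, then `a_n ≥ 2^{(2σ+1−ε)^{n−1}}` for all `n ≥ 1`. -/
theorem double_exponential_growth_recursion
    (σ ε δt m C₀ r : ℝ)
    (hσ : 0 < σ) (hε₀ : 0 < ε) (hε₁ : ε < 2 * σ)
    (hδt : 0 < δt) (hm : 0 < m) (hC₀ : 0 ≤ C₀) (hr : 1 ≤ r)
    (hr₁ : 2 * (C₀ * δt + 1) ≤ δt * m ^ (-σ) * r ^ (2 * σ))
    (hr₂ : 2 * m ^ σ ≤ δt * r ^ ε)
    (a : ℕ → ℝ)
    (hann : ∀ n, 1 ≤ n → 0 ≤ a n)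
    (ha1 : r ≤ a 1)
    (harec : ∀ n, 1 ≤ n →
      a n * (δt * m ^ (-σ) * a n ^ (2 * σ) - C₀ * δt - 1) ≤ a (n + 1)) :
    (∀ n, 1 ≤ n → r ^ ((2 * σ + 1 - ε) ^ (n - 1)) ≤ a n) ∧
      (2 ≤ r → ∀ n, 1 ≤ n → (2 : ℝ) ^ ((2 * σ + 1 - ε) ^ (n - 1)) ≤ a n) := by
  set p : ℝ := 2 * σ + 1 - ε with hp
  have hp1 : (1 : ℝ) ≤ p := by simp [hp]; linarith
  have hp0 : (0 : ℝ) ≤ p := by linarith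
  have hr0 : (0 : ℝ) < r := by linarith
  have hM : (0 : ℝ) < m ^ (-σ) := Real.rpow_pos_of_pos hm _
  have hMσ : m ^ (-σ) * m ^ σ = 1 := by
    rw [← Real.rpow_add hm]; simp
  -- key inequality
  have key : ∀ x : ℝ, r ≤ x →
      x ^ p ≤ x * (δt * m ^ (-σ) * x ^ (2 * σ) - C₀ * δt - 1) := by
    intro x hx
    have hx0 : (0 : ℝ) < x := lt_of_lt_of_le hr0 hx
    have h2σ : (0 : ℝ) ≤ 2 * σ := by linarith
    have hx2σ : r ^ (2 * σ) ≤ x ^ (2 * σ) := Real.rpow_le_rpow hr0.le hx h2σ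
    have h1 : 2 * (C₀ * δt + 1) ≤ δt * m ^ (-σ) * x ^ (2 * σ) := by
      refine hr₁.trans ?_
      have := mul_le_mul_of_nonneg_left hx2σ (by positivity : (0:ℝ) ≤ δt * m ^ (-σ))
      linarith
    have h2 : (1 / 2) * (δt * m ^ (-σ) * x ^ (2 * σ)) ≤
        δt * m ^ (-σ) * x ^ (2 * σ) - C₀ * δt - 1 := by linarith
    have hxε : r ^ ε ≤ x ^ ε := Real.rpow_le_rpow hr0.le hx hε₀.le
    have e1 : x ^ p * x ^ ε = x ^ (2 * σ) * x := by
      rw [← Real.rpow_add hx0, ← Real.rpow_add_one hx0.ne']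
      congr 1
      simp only [hp]; ring
    have hfac : (1 : ℝ) ≤ (1 / 2) * (δt * m ^ (-σ) * r ^ ε) := by
      have := mul_le_mul_of_nonneg_left hr₂ hM.le
      nlinarith
    have hrε0 : (0 : ℝ) < r ^ ε := Real.rpow_pos_of_pos hr0 _
    have hxp0 : (0 : ℝ) ≤ x ^ p := (Real.rpow_pos_of_pos hx0 _).le
    calc x ^ p = x ^ p * 1 := by ring
      _ ≤ x ^ p * ((1 / 2) * (δt * m ^ (-σ) * r ^ ε)) :=
          mul_le_mul_of_nonneg_left hfac hxp0
      _ ≤ x ^ p * ((1 / 2) * (δt * m ^ (-σ) * x ^ ε)) := by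
          have := mul_le_mul_of_nonneg_left hxε (by positivity : (0:ℝ) ≤ δt * m ^ (-σ))
          nlinarith
      _ = (1 / 2) * (δt * m ^ (-σ)) * (x ^ p * x ^ ε) := by ring
      _ = (1 / 2) * (δt * m ^ (-σ)) * (x ^ (2 * σ) * x) := by rw [e1]
      _ = x * ((1 / 2) * (δt * m ^ (-σ) * x ^ (2 * σ))) := by ring
      _ ≤ x * (δt * m ^ (-σ) * x ^ (2 * σ) - C₀ * δt - 1) :=
          mul_le_mul_of_nonneg_left h2 hx0.le
  -- main induction
  have aux : ∀ k : ℕ, r ^ (p ^ k) ≤ a (k + 1) := by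
    intro k
    induction k with
    | zero => simpa using ha1
    | succ k ih =>
      have hpk1 : (1 : ℝ) ≤ p ^ k := one_le_pow₀ hp1
      have hrk : r ≤ r ^ (p ^ k) := by
        nth_rewrite 1 [← Real.rpow_one r]
        exact Real.rpow_le_rpow_of_exponent_le hr hpk1
      have han : r ≤ a (k + 1) := hrk.trans ih
      have hstep := (key (a (k + 1)) han).trans (harec (k + 1) (by omega))
      refine le_trans ?_ hstep
      have e2 : r ^ (p ^ (k + 1)) = (r ^ (p ^ k)) ^ p := by
        rw [pow_succ, Real.rpow_mul hr0.le]
      rw [e2]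
      exact Real.rpow_le_rpow (by positivity) ih hp0
  have main : ∀ n, 1 ≤ n → r ^ (p ^ (n - 1)) ≤ a n := by
    intro n hn
    obtain ⟨k, rfl⟩ := Nat.exists_eq_add_of_le hn
    simpa [Nat.add_sub_cancel_left, add_comm] using aux k
  refine ⟨main, fun h2r n hn => ?_⟩
  refine le_trans ?_ (main n hn)
  exact Real.rpow_le_rpow (by norm_num) h2r (by positivity)
end

section
/- (Logarithmic tail estimate from logarithmic moments, core of Corollary 2.2.) Let (Ω, 𝓕, ℙ) be a probability space and let Y, A, B : Ω → [0,∞) be random variables such that Y ≤ C·(1+A)·(1+(log(1+B²))^{1/2}) almost surely, where C ≥ 1 is a constant. Fix a real p₁ ≥ 1 and suppose 𝔼[(log(1+A))^{p₁}] ≤ K and 𝔼[(log(1+log(1+B²)))^{p₁}] ≤ K for some K < ∞. Then there exist constants C₂ > 0 and R₀ > 1, depending only on C, K and p₁, such that for every R ≥ R₀: ℙ(Y ≥ R) ≤ C₂·(log R)^{−p₁}. -/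
open MeasureTheory

universe u

set_option maxHeartbeats 1000000 in
/-- Pure-real case analysis: if `R ≤ C(1+A)(1+√L)` with `R ≥ 16C²`, then either
`(1+A)` or `(1+L)` is a large power of `R`. -/
lemma key_cases (C R A L : ℝ) (hC : 1 ≤ C) (hA : 0 ≤ A) (hL : 0 ≤ L)
    (hR : 16 * C ^ 2 ≤ R)
    (hdom : R ≤ C * (1 + A) * (1 + Real.sqrt L)) :
    Real.log R / 4 ≤ Real.log (1 + A) ∨ Real.log R / 2 ≤ Real.log (1 + L) := by
  have hCpos : (0 : ℝ) < C := by linarith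
  have hRpos : (0 : ℝ) < R := by nlinarith
  set u := Real.sqrt L with hu
  have hu0 : 0 ≤ u := Real.sqrt_nonneg L
  have hu2 : u ^ 2 = L := Real.sq_sqrt hL
  set s := Real.sqrt (R / C) with hs
  have hs0 : 0 ≤ s := Real.sqrt_nonneg _
  have hs2 : s ^ 2 = R / C := Real.sq_sqrt (by positivity)
  have hRC : 16 ≤ R / C := by
    rw [le_div_iff₀ hCpos]; nlinarith
  have hs4 : 4 ≤ s := by nlinarith
  have hprod : s ^ 2 ≤ (1 + A) * (1 + u) := by
    rw [hs2, div_le_iff₀ hCpos]; nlinarith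
  by_cases h : s ≤ 1 + A
  · left
    have hA1 : (0 : ℝ) < 1 + A := by linarith
    have hkey : R ≤ (1 + A) ^ 4 := by
      have h2 : R ≤ C * (1 + A) ^ 2 := by
        have : s ^ 2 ≤ (1 + A) ^ 2 := by nlinarith
        rw [hs2] at this
        calc R = (R / C) * C := by field_simp
        _ ≤ (1 + A) ^ 2 * C := by
              apply mul_le_mul_of_nonneg_right this hCpos.le
        _ = C * (1 + A) ^ 2 := by ring
      have hsq : R * R ≤ (C * (1 + A) ^ 2) * (C * (1 + A) ^ 2) :=
        mul_le_mul h2 h2 hRpos.le (by positivity)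
      nlinarith [sq_nonneg (1 + A), sq_nonneg ((1 + A) ^ 2)]
    have := Real.log_le_log hRpos hkey
    rw [Real.log_pow] at this
    push_cast at this
    linarith
  · right
    push_neg at h
    have hsu : s ≤ 1 + u := by nlinarith
    have hL1 : (0 : ℝ) < 1 + L := by linarith
    have hu34 : 3 / 4 * s ≤ u := by linarith
    have hLbig : 9 * R ≤ 16 * C * L := by
      have h34 : (3 / 4 * s) ^ 2 ≤ u ^ 2 := by nlinarith
      rw [hu2] at h34
      have hdiv : 9 / 16 * (R / C) ≤ L := by nlinarith
      have h' := mul_le_mul_of_nonneg_left hdiv hCpos.le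
      have hcl : C * (9 / 16 * (R / C)) = 9 / 16 * R := by field_simp
      nlinarith
    have hkey : R ≤ (1 + L) ^ 2 := by
      have hLpos : 0 ≤ L := hL
      have hsq : 81 * (R * R) ≤ 256 * (C ^ 2 * L ^ 2) := by
        nlinarith [mul_le_mul hLbig hLbig (by positivity : (0:ℝ) ≤ 9 * R)
          (by positivity : (0:ℝ) ≤ 16 * C * L)]
      have hc2 : C ^ 2 * L ^ 2 ≤ R / 16 * L ^ 2 :=
        mul_le_mul_of_nonneg_right (by linarith) (sq_nonneg L)
      have hmul : 81 * (R * R) ≤ 16 * R * L ^ 2 := by nlinarith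
      have h81 : 81 * R ≤ 16 * L ^ 2 := by nlinarith [hRpos]
      nlinarith [sq_nonneg L]
    have := Real.log_le_log hRpos hkey
    rw [Real.log_pow] at this
    push_cast at this
    linarith

/-- Chebyshev–Markov for the `p`-th power of a nonnegative random variable. -/
lemma markov_aux {Ω : Type u} [MeasurableSpace Ω] (ℙ : Measure Ω) [IsProbabilityMeasure ℙ]
    (X : Ω → ℝ) (hX : Measurable X) (hX0 : ∀ ω, 0 ≤ X ω) (p K t : ℝ)
    (hp : 0 ≤ p) (ht : 0 < t)
    (hm : ∫⁻ ω, ENNReal.ofReal (X ω ^ p) ∂ℙ ≤ ENNReal.ofReal K) :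
    (ℙ {ω | t ≤ X ω}).toReal ≤ max K 0 / t ^ p := by
  have htp : (0 : ℝ) < t ^ p := Real.rpow_pos_of_pos ht p
  have hfmeas : Measurable fun ω => ENNReal.ofReal (X ω ^ p) :=
    ((Real.continuous_rpow_const hp).measurable.comp hX).ennreal_ofReal
  have hsub : {ω | t ≤ X ω} ⊆
      {ω | ENNReal.ofReal (t ^ p) ≤ ENNReal.ofReal (X ω ^ p)} := fun ω hω =>
    ENNReal.ofReal_le_ofReal (Real.rpow_le_rpow ht.le hω hp)
  have h1 : ENNReal.ofReal (t ^ p) *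
      ℙ {ω | ENNReal.ofReal (t ^ p) ≤ ENNReal.ofReal (X ω ^ p)} ≤
      ENNReal.ofReal (max K 0) :=
    le_trans (mul_meas_ge_le_lintegral₀ hfmeas.aemeasurable _)
      (le_trans hm (ENNReal.ofReal_le_ofReal (le_max_left _ _)))
  have h2 : ℙ {ω | t ≤ X ω} ≤ ENNReal.ofReal (max K 0) / ENNReal.ofReal (t ^ p) := by
    rw [ENNReal.le_div_iff_mul_le (Or.inl (by simp [htp])) (Or.inl ENNReal.ofReal_ne_top)]
    calc ℙ {ω | t ≤ X ω} * ENNReal.ofReal (t ^ p)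
        = ENNReal.ofReal (t ^ p) * ℙ {ω | t ≤ X ω} := mul_comm _ _
      _ ≤ ENNReal.ofReal (t ^ p) *
          ℙ {ω | ENNReal.ofReal (t ^ p) ≤ ENNReal.ofReal (X ω ^ p)} := by
          exact mul_le_mul_right (measure_mono hsub) _
      _ ≤ ENNReal.ofReal (max K 0) := h1
  rw [← ENNReal.ofReal_div_of_pos htp] at h2
  exact ENNReal.toReal_le_of_le_ofReal (by positivity) h2

/-- Logarithmic tail estimate from logarithmic moments (core of Corollary 2.2): if
`Y ≤ C·(1+A)·(1+(log(1+B²))^{1/2})` almost surely for nonnegative random variables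
`Y, A, B` (with `C ≥ 1`), and `𝔼[(log(1+A))^{p₁}] ≤ K`,
`𝔼[(log(1+log(1+B²)))^{p₁}] ≤ K` for some `p₁ ≥ 1`, then there exist constants
`C₂ > 0` and `R₀ > 1`, depending only on `C, K` and `p₁`, such that
`ℙ(Y ≥ R) ≤ C₂·(log R)^{−p₁}` for every `R ≥ R₀`. -/
theorem log_tail_from_log_moments (C p₁ K : ℝ) (hC : 1 ≤ C) (hp₁ : 1 ≤ p₁) :
    ∃ C₂ : ℝ, 0 < C₂ ∧ ∃ R₀ : ℝ, 1 < R₀ ∧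
      ∀ (Ω : Type u) [MeasurableSpace Ω] (ℙ : Measure Ω) [IsProbabilityMeasure ℙ]
        (Y A B : Ω → ℝ),
          Measurable Y → Measurable A → Measurable B →
          (∀ ω, 0 ≤ Y ω) → (∀ ω, 0 ≤ A ω) → (∀ ω, 0 ≤ B ω) →
          (∀ᵐ ω ∂ℙ, Y ω ≤
            C * (1 + A ω) * (1 + Real.sqrt (Real.log (1 + B ω ^ 2)))) →
          (∫⁻ ω, ENNReal.ofReal ((Real.log (1 + A ω)) ^ p₁) ∂ℙ ≤ ENNReal.ofReal K) →
          (∫⁻ ω, ENNReal.ofReal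
              ((Real.log (1 + Real.log (1 + B ω ^ 2))) ^ p₁) ∂ℙ ≤ ENNReal.ofReal K) →
          ∀ R : ℝ, R₀ ≤ R →
            (ℙ {ω | R ≤ Y ω}).toReal ≤ C₂ * (Real.log R) ^ (-p₁) := by
  refine ⟨max K 0 * ((4 : ℝ) ^ p₁ + (2 : ℝ) ^ p₁) + 1, by positivity,
    16 * C ^ 2, by nlinarith, ?_⟩
  intro Ω _ ℙ _ Y A B hYm hAm hBm hY0 hA0 hB0 hdom hm1 hm2 R hR
  have hRpos : (0 : ℝ) < R := by nlinarith
  have hlogR : 1 ≤ Real.log R := by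
    rw [Real.le_log_iff_exp_le hRpos]
    have h1 : Real.exp 1 < 2.7182818286 := Real.exp_one_lt_d9
    nlinarith
  -- auxiliary random variables
  set X₁ : Ω → ℝ := fun ω => Real.log (1 + A ω) with hX₁
  set X₂ : Ω → ℝ := fun ω => Real.log (1 + Real.log (1 + B ω ^ 2)) with hX₂
  have hL0 : ∀ ω, 0 ≤ Real.log (1 + B ω ^ 2) := fun ω =>
    Real.log_nonneg (by nlinarith [sq_nonneg (B ω)])
  have hX₁0 : ∀ ω, 0 ≤ X₁ ω := fun ω => Real.log_nonneg (by linarith [hA0 ω])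
  have hX₂0 : ∀ ω, 0 ≤ X₂ ω := fun ω => Real.log_nonneg (by linarith [hL0 ω])
  have hX₁m : Measurable X₁ := by
    have : Measurable fun ω => 1 + A ω := measurable_const.add hAm
    exact this.log
  have hX₂m : Measurable X₂ := by
    have h1 : Measurable fun ω => 1 + B ω ^ 2 := measurable_const.add (hBm.pow_const 2)
    have h2 : Measurable fun ω => 1 + Real.log (1 + B ω ^ 2) := measurable_const.add h1.log
    exact h2.log
  -- set inclusion (a.e.)
  have hsub : ℙ {ω | R ≤ Y ω} ≤
      ℙ {ω | Real.log R / 4 ≤ X₁ ω} + ℙ {ω | Real.log R / 2 ≤ X₂ ω} := by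
    refine le_trans (measure_mono_ae ?_) (measure_union_le _ _)
    filter_upwards [hdom] with ω hω hmem
    exact key_cases C R (A ω) (Real.log (1 + B ω ^ 2)) hC (hA0 ω) (hL0 ω) hR
      (le_trans hmem hω)
  -- Markov on each piece
  have hb1 := markov_aux ℙ X₁ hX₁m hX₁0 p₁ K (Real.log R / 4) (by linarith)
    (by linarith) hm1
  have hb2 := markov_aux ℙ X₂ hX₂m hX₂0 p₁ K (Real.log R / 2) (by linarith)
    (by linarith) hm2
  have hfin1 : ℙ {ω | Real.log R / 4 ≤ X₁ ω} ≠ ⊤ := measure_ne_top _ _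
  have hfin2 : ℙ {ω | Real.log R / 2 ≤ X₂ ω} ≠ ⊤ := measure_ne_top _ _
  have htoReal : (ℙ {ω | R ≤ Y ω}).toReal ≤
      (ℙ {ω | Real.log R / 4 ≤ X₁ ω}).toReal + (ℙ {ω | Real.log R / 2 ≤ X₂ ω}).toReal := by
    rw [← ENNReal.toReal_add hfin1 hfin2]
    exact ENNReal.toReal_mono (by simp [ENNReal.add_ne_top, hfin1, hfin2]) hsub
  -- final arithmetic
  have hlogpos : (0 : ℝ) < Real.log R := by linarith
  have hrp : (0 : ℝ) < Real.log R ^ p₁ := Real.rpow_pos_of_pos hlogpos p₁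
  have e1 : max K 0 / (Real.log R / 4) ^ p₁ =
      max K 0 * (4 : ℝ) ^ p₁ * Real.log R ^ (-p₁) := by
    rw [Real.div_rpow hlogpos.le (by norm_num), Real.rpow_neg hlogpos.le]
    have h4 : (0 : ℝ) < (4 : ℝ) ^ p₁ := Real.rpow_pos_of_pos (by norm_num) p₁
    field_simp
  have e2 : max K 0 / (Real.log R / 2) ^ p₁ =
      max K 0 * (2 : ℝ) ^ p₁ * Real.log R ^ (-p₁) := by
    rw [Real.div_rpow hlogpos.le (by norm_num), Real.rpow_neg hlogpos.le]
    have h2 : (0 : ℝ) < (2 : ℝ) ^ p₁ := Real.rpow_pos_of_pos (by norm_num) p₁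
    field_simp
  have hrpneg : (0 : ℝ) ≤ Real.log R ^ (-p₁) :=
    (Real.rpow_pos_of_pos hlogpos _).le
  calc (ℙ {ω | R ≤ Y ω}).toReal
      ≤ max K 0 / (Real.log R / 4) ^ p₁ + max K 0 / (Real.log R / 2) ^ p₁ := by
        refine le_trans htoReal (add_le_add hb1 hb2)
    _ = max K 0 * ((4 : ℝ) ^ p₁ + (2 : ℝ) ^ p₁) * Real.log R ^ (-p₁) := by
        rw [e1, e2]; ring
    _ ≤ (max K 0 * ((4 : ℝ) ^ p₁ + (2 : ℝ) ^ p₁) + 1) * Real.log R ^ (-p₁) := by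
        apply mul_le_mul_of_nonneg_right (by linarith) hrpneg
end
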